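/- For every natural number n ≥ 1, the Hirzebruch–Jung continued fraction [3^{n−1}, 5, 3^{n−1}, 2] (that is, n−1 threes, then 5, then n−1 threes, then 2) equals F(2n+2)²/(F(2n+2)·F(2n) − 1). -/
import Mathlib

def hj : List ℚ → ℚ
  | [] => 0
  | a :: l => a - 1 / hj l

def hjN (l : List ℕ) : ℚ := hj (l.map (fun x => (x : ℚ)))

lemma hjN_cons (a : ℕ) (l : List ℕ) : hjN (a :: l) = (a : ℚ) - 1 / hjN l := rfl

lemma fib_step (j : ℕ) : Nat.fib (j+4) + Nat.fib j = 3 * Nat.fib (j+2) := by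
  have h1 := Nat.fib_add_two (n := j)
  have h2 : Nat.fib (j+3) = Nat.fib (j+1) + Nat.fib (j+2) := by
    rw [show j+3 = (j+1)+2 by omega, Nat.fib_add_two]
  have h3 : Nat.fib (j+4) = Nat.fib (j+2) + Nat.fib (j+3) := by
    rw [show j+4 = (j+2)+2 by omega, Nat.fib_add_two]
  omega

def A (m k : ℕ) : ℕ := Nat.fib (2*m+4) * Nat.fib (2*k) + Nat.fib (2*m+3) * Nat.fib (2*k+2)

lemma A_pos (m k : ℕ) : 0 < A m k := by
  have h1 : 0 < Nat.fib (2*m+3) := Nat.fib_pos.2 (by omega)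
  have h2 : 0 < Nat.fib (2*k+2) := Nat.fib_pos.2 (by omega)
  have := Nat.mul_pos h1 h2
  unfold A; omega

lemma A_rec (m k : ℕ) : A m (k+2) + A m k = 3 * A m (k+1) := by
  unfold A
  rw [show 2*(k+2) = 2*k+4 by ring, show 2*k+4+2 = (2*k+2)+4 by ring,
    show 2*(k+1) = 2*k+2 by ring, show 2*k+2+2 = 2*k+4 by ring]
  have ha := fib_step (2*k)
  have hb := fib_step (2*k+2)
  have : Nat.fib (2*m+4) * Nat.fib (2*k+4) + Nat.fib (2*m+3) * Nat.fib (2*k+2+4) +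
      (Nat.fib (2*m+4) * Nat.fib (2*k) + Nat.fib (2*m+3) * Nat.fib (2*k+2)) =
      Nat.fib (2*m+4) * (Nat.fib (2*k+4) + Nat.fib (2*k)) +
      Nat.fib (2*m+3) * (Nat.fib (2*k+2+4) + Nat.fib (2*k+2)) := by ring
  rw [this, ha, hb]; ring

lemma L1 (k : ℕ) : hjN (List.replicate k 3 ++ [2]) =
    (Nat.fib (2*k+3) : ℚ) / (Nat.fib (2*k+1) : ℚ) := by
  induction k with
  | zero =>
    show hjN [2] = _
    rw [hjN_cons]
    norm_num [hjN, hj, Nat.fib]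
  | succ k ih =>
    have hp : (0:ℚ) < Nat.fib (2*k+3) := by exact_mod_cast Nat.fib_pos.2 (by omega)
    have hq : (0:ℚ) < Nat.fib (2*k+1) := by exact_mod_cast Nat.fib_pos.2 (by omega)
    rw [List.replicate_succ, List.cons_append, hjN_cons, ih,
      show 2*(k+1)+3 = (2*k+1)+4 by ring, show 2*(k+1)+1 = 2*k+3 by ring]
    have hs := fib_step (2*k+1)
    have hs' : (Nat.fib (2*k+1+4) : ℚ) + Nat.fib (2*k+1) = 3 * Nat.fib (2*k+1+2) := by
      exact_mod_cast hs
    rw [show 2*k+1+2 = 2*k+3 by ring] at hs'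
    push_cast
    field_simp
    linarith [hs']

lemma L3 (m k : ℕ) : hjN (List.replicate k 3 ++ 5 :: (List.replicate m 3 ++ [2])) =
    (A m (k+1) : ℚ) / (A m k : ℚ) := by
  induction k with
  | zero =>
    have hp : (0:ℚ) < Nat.fib (2*m+3) := by exact_mod_cast Nat.fib_pos.2 (by omega)
    have hq : (0:ℚ) < Nat.fib (2*m+1) := by exact_mod_cast Nat.fib_pos.2 (by omega)
    rw [List.replicate, List.nil_append, hjN_cons, L1]
    have h0 : A m 0 = Nat.fib (2*m+3) := by simp [A]
    have h1 : A m 1 = Nat.fib (2*m+4) + Nat.fib (2*m+3) * 3 := by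
      simp [A, Nat.fib]
    have e : (Nat.fib (2*m+4) : ℚ) = Nat.fib (2*m+2) + Nat.fib (2*m+3) := by
      exact_mod_cast (by rw [show 2*m+4 = (2*m+2)+2 by ring, Nat.fib_add_two] :
        Nat.fib (2*m+4) = Nat.fib (2*m+2) + Nat.fib (2*m+3))
    have e2 : (Nat.fib (2*m+3) : ℚ) = Nat.fib (2*m+1) + Nat.fib (2*m+2) := by
      exact_mod_cast (by rw [show 2*m+3 = (2*m+1)+2 by ring, Nat.fib_add_two] :
        Nat.fib (2*m+3) = Nat.fib (2*m+1) + Nat.fib (2*m+2))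
    have key : (Nat.fib (2*m+4) : ℚ) = 2 * Nat.fib (2*m+3) - Nat.fib (2*m+1) := by
      rw [e, e2]; ring
    rw [h0, h1]
    push_cast
    rw [key]
    field_simp
    all_goals ring
  | succ k ih =>
    have hp : (0:ℚ) < A m (k+1) := by exact_mod_cast A_pos m (k+1)
    have hq : (0:ℚ) < A m k := by exact_mod_cast A_pos m k
    have hrec : (A m (k+2) : ℚ) = 3 * A m (k+1) - A m k := by
      have h := A_rec m k
      have h' : (A m (k+2) : ℚ) + A m k = 3 * A m (k+1) := by exact_mod_cast h
      linarith
    rw [List.replicate_succ, List.cons_append, hjN_cons, ih, hrec]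
    push_cast
    field_simp

lemma fib_id (m : ℕ) :
    (Nat.fib (2*m+4) : ℤ) * Nat.fib (2*m+1) - Nat.fib (2*m+3) * Nat.fib (2*m+2) = 1 := by
  induction m with
  | zero => decide
  | succ k ih =>
    have h3 : Nat.fib (2*k+3) = Nat.fib (2*k+1) + Nat.fib (2*k+2) := by
      rw [show 2*k+3 = (2*k+1)+2 by omega, Nat.fib_add_two]
    have h4 : Nat.fib (2*k+4) = Nat.fib (2*k+2) + Nat.fib (2*k+3) := by
      rw [show 2*k+4 = (2*k+2)+2 by omega, Nat.fib_add_two]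
    have h5 : Nat.fib (2*k+5) = Nat.fib (2*k+3) + Nat.fib (2*k+4) := by
      rw [show 2*k+5 = (2*k+3)+2 by omega, Nat.fib_add_two]
    have h6 : Nat.fib (2*k+6) = Nat.fib (2*k+4) + Nat.fib (2*k+5) := by
      rw [show 2*k+6 = (2*k+4)+2 by omega, Nat.fib_add_two]
    rw [show 2*(k+1)+4 = 2*k+6 by ring, show 2*(k+1)+3 = 2*k+5 by ring,
      show 2*(k+1)+2 = 2*k+4 by ring, show 2*(k+1)+1 = 2*k+3 by ring,
      h6, h5, h4, h3]
    rw [h4, h3] at ih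
    push_cast at ih ⊢
    linear_combination ih

theorem stmt13 (n : ℕ) (hn : 1 ≤ n) :
    hjN (List.replicate (n - 1) 3 ++ [5] ++ List.replicate (n - 1) 3 ++ [2]) =
      ((Nat.fib (2 * n + 2) ^ 2 : ℕ) : ℚ) /
        ((Nat.fib (2 * n + 2) * Nat.fib (2 * n) - 1 : ℕ) : ℚ) := by
  obtain ⟨m, rfl⟩ : ∃ m, n = m + 1 := ⟨n - 1, by omega⟩
  have hl : List.replicate (m+1-1) 3 ++ [5] ++ List.replicate (m+1-1) 3 ++ [2]
      = List.replicate m 3 ++ 5 :: (List.replicate m 3 ++ [2]) := by simp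
  rw [hl, L3]
  have hnum : A m (m+1) = Nat.fib (2*m+4) ^ 2 := by
    unfold A
    rw [show 2*(m+1) = 2*m+2 by ring, show 2*m+2+2 = 2*m+4 by ring]
    have e : Nat.fib (2*m+4) = Nat.fib (2*m+2) + Nat.fib (2*m+3) := by
      rw [show 2*m+4 = (2*m+2)+2 by ring, Nat.fib_add_two]
    nlinarith [e]
  have h2 := fib_id m
  have hden : (A m m : ℤ) = (Nat.fib (2*m+4) : ℤ) * Nat.fib (2*m+2) - 1 := by
    have e : (Nat.fib (2*m+2) : ℤ) = (Nat.fib (2*m) : ℤ) + Nat.fib (2*m+1) := by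
      exact_mod_cast (Nat.fib_add_two (n := 2*m))
    unfold A
    push_cast
    linear_combination (-1 : ℤ) * h2 + (-(Nat.fib (2*m+4):ℤ)) * e
  have h1 : 1 ≤ Nat.fib (2*m+4) * Nat.fib (2*m+2) := by
    have a1 := Nat.fib_pos.2 (show 0 < 2*m+4 by omega)
    have a2 := Nat.fib_pos.2 (show 0 < 2*m+2 by omega)
    exact Nat.one_le_iff_ne_zero.2 (by positivity)
  rw [show 2*(m+1)+2 = 2*m+4 by ring, show 2*(m+1) = 2*m+2 by ring, hnum]
  have hQden : ((Nat.fib (2*m+4) * Nat.fib (2*m+2) - 1 : ℕ) : ℚ) = (A m m : ℚ) := by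
    have : ((Nat.fib (2*m+4) * Nat.fib (2*m+2) - 1 : ℕ) : ℤ) = (A m m : ℤ) := by
      push_cast [h1]
      linarith [hden]
    exact_mod_cast this
  rw [hQden]
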